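/- Let (X,‖·‖) be a real normed space of dimension at least 2. The following conditions are equivalent: (i) ⊥_B ⊆ ⊥_{ρ*}; (ii) ⊥_B = ⊥_{ρ*}; (iii) ⊥_ρ ⊆ ⊥_{ρ*}; (iv) ⊥_{ρ*} ⊆ ⊥_ρ; (v) ⊥_{ρ*} = ⊥_ρ; (vi) ⊥_{ρ*} ⊆ ⊥_{ρ₊}; (vii) ⊥_{ρ*} ⊆ ⊥_{ρ₋}; (viii) ⊥_{ρ*} = ⊥_{ρ₋}; (ix) X is smooth, i.e., ρ₋(x,y) = ρ₊(x,y) for all x,y ∈ X. -/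

import Mathlib

/-
Both norm derivatives are halves of the one-sided derivatives at `0` of the convex function
`t ↦ ‖x + t • y‖ ^ 2`. Hence `ρ₋ ≤ ρ₊`, and `x ⊥_B y`, which says that `0` minimises this
function, holds iff `ρ₋(x, y) ≤ 0 ≤ ρ₊(x, y)`. Replacing `y` by `y + α • x` shifts both
`ρ₋(x, y)` and `ρ₊(x, y)` by `α ‖x‖²`. So if `X` is not smooth, there is a gap `d > 0` such that
`(ρ₋, ρ₊) = (s, s + d)` is attained for every `s`; the choices `s = -d/2`, `0`, `-d` violate each
of the inclusions. In a smooth space `ρ₋ = ρ = ρ₊` and `ρ* = ρ₊²`, and all the conditions hold.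
-/

open Filter Topology

/-- The norm derivative `ρ₊(x,y) = lim_{t→0⁺} (‖x+ty‖² − ‖x‖²)/(2t)`. -/
noncomputable def rhoPlus {X : Type*} [NormedAddCommGroup X] [NormedSpace ℝ X] (x y : X) : ℝ :=
  limUnder (𝓝[>] (0 : ℝ)) (fun t : ℝ => (‖x + t • y‖ ^ 2 - ‖x‖ ^ 2) / (2 * t))

/-- The norm derivative `ρ₋(x,y) = lim_{t→0⁻} (‖x+ty‖² − ‖x‖²)/(2t)`. -/
noncomputable def rhoMinus {X : Type*} [NormedAddCommGroup X] [NormedSpace ℝ X] (x y : X) : ℝ :=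
  limUnder (𝓝[<] (0 : ℝ)) (fun t : ℝ => (‖x + t • y‖ ^ 2 - ‖x‖ ^ 2) / (2 * t))

/-- `ρ*(x,y) := ρ₋(x,y)·ρ₊(x,y)`. -/
noncomputable def rhoStar {X : Type*} [NormedAddCommGroup X] [NormedSpace ℝ X] (x y : X) : ℝ :=
  rhoMinus x y * rhoPlus x y
/-- `ρ(x,y) := (ρ₋(x,y) + ρ₊(x,y))/2`. -/
noncomputable def rhoMid {X : Type*} [NormedAddCommGroup X] [NormedSpace ℝ X] (x y : X) : ℝ :=
  (rhoMinus x y + rhoPlus x y) / 2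

open Set

theorem ConvexOn.isMinOn_iff_leftDeriv_nonpos_and_rightDeriv_nonneg {S : Set ℝ} {f : ℝ → ℝ}
    {a : ℝ} (hf : ConvexOn ℝ S f) (ha : a ∈ interior S) :
    IsMinOn f S a ↔ derivWithin f (Iio a) a ≤ 0 ∧ 0 ≤ derivWithin f (Ioi a) a := by
  have hS : ∀ᶠ t in 𝓝 a, t ∈ S := mem_interior_iff_mem_nhds.mp ha
  refine ⟨fun hmin => ⟨?_, ?_⟩,
    fun h => hf.isMinOn_of_leftDeriv_nonpos_of_rightDeriv_nonneg ha h.1 h.2⟩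
  · refine le_of_tendsto ((hasDerivWithinAt_iff_tendsto_slope' self_notMem_Iio).mp
      (hf.hasDerivWithinAt_leftDeriv_of_mem_interior ha)) ?_
    filter_upwards [self_mem_nhdsWithin, nhdsWithin_le_nhds hS] with t (ht : t < a) htS
    rw [slope_def_field]
    exact div_nonpos_of_nonneg_of_nonpos (sub_nonneg.2 (hmin htS)) (by linarith)
  · refine ge_of_tendsto ((hasDerivWithinAt_iff_tendsto_slope' self_notMem_Ioi).mp
      (hf.hasDerivWithinAt_rightDeriv_of_mem_interior ha)) ?_
    filter_upwards [self_mem_nhdsWithin, nhdsWithin_le_nhds hS] with t (ht : a < t) htS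
    rw [slope_def_field]
    exact div_nonneg (sub_nonneg.2 (hmin htS)) (by linarith)

section NormDerivatives

variable {X : Type*} [NormedAddCommGroup X] [NormedSpace ℝ X]

def sqNormAlong (x y : X) (t : ℝ) : ℝ := ‖x + t • y‖ ^ 2

theorem convexOn_sqNormAlong (x y : X) : ConvexOn ℝ univ (sqNormAlong x y) := by
  have hline : ConvexOn ℝ univ (fun t : ℝ => ‖x + t • y‖) := by
    have hline_eq : (fun t : ℝ => ‖x + t • y‖) = norm ∘ AffineMap.lineMap x (x + y) := by
      funext t
      simp [AffineMap.lineMap_apply, add_comm]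
    rw [hline_eq]
    simpa using convexOn_univ_norm.comp_affineMap (AffineMap.lineMap x (x + y))
  exact hline.pow (fun _ _ => norm_nonneg _) 2

theorem limUnder_diffQuotient_eq_half (x y : X) {s : Set ℝ} (hs : (0 : ℝ) ∉ s)
    [(𝓝[s] (0 : ℝ)).NeBot] {D : ℝ} (h : HasDerivWithinAt (sqNormAlong x y) D s 0) :
    limUnder (𝓝[s] 0) (fun t : ℝ => (‖x + t • y‖ ^ 2 - ‖x‖ ^ 2) / (2 * t)) = D / 2 := by
  have hq : (fun t : ℝ => (‖x + t • y‖ ^ 2 - ‖x‖ ^ 2) / (2 * t)) =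
      fun t => slope (sqNormAlong x y) 0 t / 2 := by
    funext t
    simp [slope_def_field, sqNormAlong, div_div, mul_comm]
  rw [hq]
  exact (((hasDerivWithinAt_iff_tendsto_slope' hs).mp h).div_const 2).limUnder_eq

theorem rhoPlus_eq_of_hasDerivWithinAt {x y : X} {D : ℝ}
    (h : HasDerivWithinAt (sqNormAlong x y) D (Ioi 0) 0) : rhoPlus x y = D / 2 :=
  limUnder_diffQuotient_eq_half x y self_notMem_Ioi h

theorem rhoMinus_eq_of_hasDerivWithinAt {x y : X} {D : ℝ}
    (h : HasDerivWithinAt (sqNormAlong x y) D (Iio 0) 0) : rhoMinus x y = D / 2 :=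
  limUnder_diffQuotient_eq_half x y self_notMem_Iio h

theorem rhoPlus_eq_half_rightDeriv (x y : X) :
    rhoPlus x y = derivWithin (sqNormAlong x y) (Ioi 0) 0 / 2 :=
  rhoPlus_eq_of_hasDerivWithinAt <|
    (convexOn_sqNormAlong x y).hasDerivWithinAt_rightDeriv_of_mem_interior (by simp)

theorem rhoMinus_eq_half_leftDeriv (x y : X) :
    rhoMinus x y = derivWithin (sqNormAlong x y) (Iio 0) 0 / 2 :=
  rhoMinus_eq_of_hasDerivWithinAt <|
    (convexOn_sqNormAlong x y).hasDerivWithinAt_leftDeriv_of_mem_interior (by simp)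

theorem rhoMinus_le_rhoPlus (x y : X) : rhoMinus x y ≤ rhoPlus x y := by
  rw [rhoMinus_eq_half_leftDeriv, rhoPlus_eq_half_rightDeriv]
  gcongr
  exact (convexOn_sqNormAlong x y).leftDeriv_le_rightDeriv_of_mem_interior (by simp)

theorem rhoMinus_eq_rhoPlus_of_hasDerivAt {x y : X} {D : ℝ}
    (h : HasDerivAt (sqNormAlong x y) D 0) : rhoMinus x y = rhoPlus x y := by
  rw [rhoMinus_eq_of_hasDerivWithinAt h.hasDerivWithinAt,
    rhoPlus_eq_of_hasDerivWithinAt h.hasDerivWithinAt]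

theorem hasDerivAt_sqNormAlong_zero_left (y : X) : HasDerivAt (sqNormAlong 0 y) 0 0 := by
  have h : sqNormAlong 0 y = fun t => ‖y‖ ^ 2 * t ^ 2 := by
    funext t
    rw [sqNormAlong, zero_add, norm_smul, Real.norm_eq_abs, mul_pow, sq_abs, mul_comm]
  rw [h]
  simpa using ((hasDerivAt_id (0 : ℝ)).pow 2).const_mul (‖y‖ ^ 2)

theorem birkhoffOrthogonal_iff (x y : X) :
    (∀ lam : ℝ, ‖x‖ ≤ ‖x + lam • y‖) ↔ rhoMinus x y ≤ 0 ∧ 0 ≤ rhoPlus x y := by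
  have hmin : (∀ lam : ℝ, ‖x‖ ≤ ‖x + lam • y‖) ↔ IsMinOn (sqNormAlong x y) univ 0 := by
    simp only [isMinOn_univ_iff, sqNormAlong, zero_smul, add_zero]
    exact forall_congr' fun lam =>
      (pow_le_pow_iff_left₀ (norm_nonneg _) (norm_nonneg _) two_ne_zero).symm
  rw [hmin, (convexOn_sqNormAlong x y).isMinOn_iff_leftDeriv_nonpos_and_rightDeriv_nonneg
    (by simp), rhoMinus_eq_half_leftDeriv, rhoPlus_eq_half_rightDeriv]
  constructor <;> rintro ⟨h₁, h₂⟩ <;> constructor <;> linarith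

theorem sqNormAlong_add_smul_self (x y : X) (α : ℝ) {t : ℝ} (ht : 1 + t * α ≠ 0) :
    sqNormAlong x (y + α • x) t = (1 + t * α) ^ 2 * sqNormAlong x y (t / (1 + t * α)) := by
  have h : x + t • (y + α • x) = (1 + t * α) • (x + (t / (1 + t * α)) • y) := by
    rw [smul_add (1 + t * α), smul_smul, mul_div_cancel₀ _ ht]
    module
  rw [sqNormAlong, sqNormAlong, h, norm_smul, mul_pow, Real.norm_eq_abs, sq_abs]

theorem HasDerivWithinAt.sqNormAlong_add_smul_self {x y : X} {s : Set ℝ}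
    (hs : ∀ c : ℝ, 0 < c → ∀ t ∈ s, c * t ∈ s) {D : ℝ}
    (h : HasDerivWithinAt (sqNormAlong x y) D s 0) (α : ℝ) :
    HasDerivWithinAt (sqNormAlong x (y + α • x)) (D + 2 * α * ‖x‖ ^ 2) s 0 := by
  have hpos : {t : ℝ | 0 < 1 + t * α} ∈ 𝓝 0 :=
    (isOpen_lt continuous_const (by fun_prop)).mem_nhds (by simp)
  have hg : HasDerivAt (fun t : ℝ => t / (1 + t * α)) 1 0 :=
    ((hasDerivAt_id' 0).div (((hasDerivAt_id' 0).mul_const α).const_add 1)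
      (by simp)).congr_deriv (by simp)
  have hc : HasDerivAt (fun t : ℝ => (1 + t * α) ^ 2) (2 * α) 0 :=
    ((((hasDerivAt_id' 0).mul_const α).const_add 1).pow 2).congr_deriv (by simp)
  have hcomp : HasDerivWithinAt (fun t => sqNormAlong x y (t / (1 + t * α))) (D * 1)
      (s ∩ {t | 0 < 1 + t * α}) 0 :=
    h.comp_of_eq 0 hg.hasDerivWithinAt
      (fun t ht => by simpa [div_eq_inv_mul] using hs _ (inv_pos.2 ht.2) t ht.1) (by simp)
  rw [← hasDerivWithinAt_inter hpos]
  convert (hc.hasDerivWithinAt.mul hcomp).congr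
    (fun t ht => _root_.sqNormAlong_add_smul_self x y α ht.2.ne') (by simp [sqNormAlong])
    using 1
  simp only [sqNormAlong, zero_mul, add_zero, div_one, zero_smul, one_pow, mul_one, one_mul]
  ring

theorem rhoPlus_add_smul_self (x y : X) (α : ℝ) :
    rhoPlus x (y + α • x) = rhoPlus x y + α * ‖x‖ ^ 2 := by
  have h := (convexOn_sqNormAlong x y).hasDerivWithinAt_rightDeriv_of_mem_interior
    (x := 0) (by simp)
  rw [rhoPlus_eq_half_rightDeriv x y, rhoPlus_eq_of_hasDerivWithinAt
    (h.sqNormAlong_add_smul_self (fun c hc t ht => mul_pos hc ht) α)]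
  ring

theorem rhoMinus_add_smul_self (x y : X) (α : ℝ) :
    rhoMinus x (y + α • x) = rhoMinus x y + α * ‖x‖ ^ 2 := by
  have h := (convexOn_sqNormAlong x y).hasDerivWithinAt_leftDeriv_of_mem_interior
    (x := 0) (by simp)
  rw [rhoMinus_eq_half_leftDeriv x y, rhoMinus_eq_of_hasDerivWithinAt
    (h.sqNormAlong_add_smul_self (fun c hc t ht => mul_neg_of_pos_of_neg hc ht) α)]
  ring

theorem exists_gap_of_not_smooth (h : ¬ ∀ x y : X, rhoMinus x y = rhoPlus x y) :
    ∃ d > 0, ∀ s : ℝ, ∃ x y : X, rhoMinus x y = s ∧ rhoPlus x y = s + d := by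
  push Not at h
  obtain ⟨x, y, hxy⟩ := h
  have hx : ‖x‖ ≠ 0 := by
    intro hx
    rw [norm_eq_zero.1 hx] at hxy
    exact hxy (rhoMinus_eq_rhoPlus_of_hasDerivAt (hasDerivAt_sqNormAlong_zero_left y))
  refine ⟨rhoPlus x y - rhoMinus x y,
    sub_pos.2 ((rhoMinus_le_rhoPlus x y).lt_of_ne hxy), fun s => ?_⟩
  refine ⟨x, y + ((s - rhoMinus x y) / ‖x‖ ^ 2) • x, ?_, ?_⟩
  · rw [rhoMinus_add_smul_self]
    field_simp
    ring
  · rw [rhoPlus_add_smul_self]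
    field_simp
    ring

theorem smooth_of_birkhoff_imp_rhoStar_eq_zero
    (h : ∀ x y : X, (∀ lam : ℝ, ‖x‖ ≤ ‖x + lam • y‖) → rhoStar x y = 0) :
    ∀ x y : X, rhoMinus x y = rhoPlus x y := by
  by_contra hns
  obtain ⟨d, hd, hgap⟩ := exists_gap_of_not_smooth hns
  obtain ⟨x, y, hm, hp⟩ := hgap (-d / 2)
  have h0 := h x y ((birkhoffOrthogonal_iff x y).2 ⟨by linarith, by linarith⟩)
  rw [rhoStar, hm, hp] at h0
  nlinarith

theorem smooth_of_rhoMid_imp_rhoStar_eq_zero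
    (h : ∀ x y : X, rhoMid x y = 0 → rhoStar x y = 0) :
    ∀ x y : X, rhoMinus x y = rhoPlus x y := by
  by_contra hns
  obtain ⟨d, hd, hgap⟩ := exists_gap_of_not_smooth hns
  obtain ⟨x, y, hm, hp⟩ := hgap (-d / 2)
  have h0 := h x y (by rw [rhoMid, hm, hp]; ring)
  rw [rhoStar, hm, hp] at h0
  nlinarith

theorem smooth_of_rhoStar_imp_rhoMid_eq_zero
    (h : ∀ x y : X, rhoStar x y = 0 → rhoMid x y = 0) :
    ∀ x y : X, rhoMinus x y = rhoPlus x y := by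
  by_contra hns
  obtain ⟨d, hd, hgap⟩ := exists_gap_of_not_smooth hns
  obtain ⟨x, y, hm, hp⟩ := hgap 0
  have h0 := h x y (by rw [rhoStar, hm, zero_mul])
  rw [rhoMid, hm, hp] at h0
  linarith

theorem smooth_of_rhoStar_imp_rhoPlus_eq_zero
    (h : ∀ x y : X, rhoStar x y = 0 → rhoPlus x y = 0) :
    ∀ x y : X, rhoMinus x y = rhoPlus x y := by
  by_contra hns
  obtain ⟨d, hd, hgap⟩ := exists_gap_of_not_smooth hns
  obtain ⟨x, y, hm, hp⟩ := hgap 0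
  have h0 := h x y (by rw [rhoStar, hm, zero_mul])
  linarith

theorem smooth_of_rhoStar_imp_rhoMinus_eq_zero
    (h : ∀ x y : X, rhoStar x y = 0 → rhoMinus x y = 0) :
    ∀ x y : X, rhoMinus x y = rhoPlus x y := by
  by_contra hns
  obtain ⟨d, hd, hgap⟩ := exists_gap_of_not_smooth hns
  obtain ⟨x, y, hm, hp⟩ := hgap (-d)
  have h0 := h x y (by rw [rhoStar, hp, neg_add_cancel, mul_zero])
  linarith

end NormDerivatives

theorem smooth_tfae_general {X : Type*} [NormedAddCommGroup X] [NormedSpace ℝ X] :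
    List.TFAE
      [ ∀ x y : X, (∀ lam : ℝ, ‖x‖ ≤ ‖x + lam • y‖) → rhoStar x y = 0,
        ∀ x y : X, (∀ lam : ℝ, ‖x‖ ≤ ‖x + lam • y‖) ↔ rhoStar x y = 0,
        ∀ x y : X, rhoMid x y = 0 → rhoStar x y = 0,
        ∀ x y : X, rhoStar x y = 0 → rhoMid x y = 0,
        ∀ x y : X, rhoStar x y = 0 ↔ rhoMid x y = 0,
        ∀ x y : X, rhoStar x y = 0 → rhoPlus x y = 0,
        ∀ x y : X, rhoStar x y = 0 → rhoMinus x y = 0,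
        ∀ x y : X, rhoStar x y = 0 ↔ rhoMinus x y = 0,
        ∀ x y : X, rhoMinus x y = rhoPlus x y ] := by
  tfae_have 9 → 2 := fun h x y => by
    rw [birkhoffOrthogonal_iff, rhoStar, h x y, mul_self_eq_zero, le_antisymm_iff, and_comm]
  tfae_have 9 → 5 := fun h x y => by
    rw [rhoStar, rhoMid, h x y, mul_self_eq_zero]
    constructor <;> intro h <;> linarith
  tfae_have 9 → 8 := fun h x y => by rw [rhoStar, h x y, mul_self_eq_zero]
  tfae_have 9 → 6 := fun h x y => by rw [rhoStar, h x y, mul_self_eq_zero]; exact id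
  tfae_have 2 → 1 := fun h x y => (h x y).1
  tfae_have 5 → 3 := fun h x y => (h x y).2
  tfae_have 5 → 4 := fun h x y => (h x y).1
  tfae_have 8 → 7 := fun h x y => (h x y).1
  tfae_have 1 → 9 := smooth_of_birkhoff_imp_rhoStar_eq_zero
  tfae_have 3 → 9 := smooth_of_rhoMid_imp_rhoStar_eq_zero
  tfae_have 4 → 9 := smooth_of_rhoStar_imp_rhoMid_eq_zero
  tfae_have 6 → 9 := smooth_of_rhoStar_imp_rhoPlus_eq_zero
  tfae_have 7 → 9 := smooth_of_rhoStar_imp_rhoMinus_eq_zero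
  tfae_finish

theorem smooth_tfae {X : Type*} [NormedAddCommGroup X] [NormedSpace ℝ X]
    (hdim : 2 ≤ Module.rank ℝ X) :
    List.TFAE
      [ ∀ x y : X, (∀ lam : ℝ, ‖x‖ ≤ ‖x + lam • y‖) → rhoStar x y = 0,
        ∀ x y : X, (∀ lam : ℝ, ‖x‖ ≤ ‖x + lam • y‖) ↔ rhoStar x y = 0,
        ∀ x y : X, rhoMid x y = 0 → rhoStar x y = 0,
        ∀ x y : X, rhoStar x y = 0 → rhoMid x y = 0,
        ∀ x y : X, rhoStar x y = 0 ↔ rhoMid x y = 0,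
        ∀ x y : X, rhoStar x y = 0 → rhoPlus x y = 0,
        ∀ x y : X, rhoStar x y = 0 → rhoMinus x y = 0,
        ∀ x y : X, rhoStar x y = 0 ↔ rhoMinus x y = 0,
        ∀ x y : X, rhoMinus x y = rhoPlus x y ] :=
  smooth_tfae_general
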